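/- For every r ∈ [0,1] and every i ∈ {1,…,m}, ℙ(I = i and U_i ≤ r) = p_i r^{1/p_i}; and for every j ≠ i, ℙ(I = i and U_j ≤ r) = p_i (r − p_j r^{1/p_j}) / (1 − p_j). -/

import Mathlib

/-!
Since `u ↦ log u / p` is increasing, on `(0,1)^m` the event `I = i` is the region
`x_k < x_i ^ (p_k / p_i)` for all `k ≠ i`. Given `x_i = t`, the other coordinates are
independent and uniform, so the region has conditional probability
`∏_{k ≠ i} t ^ (p_k / p_i) = t ^ ((1 - p_i) / p_i)`, and
`ℙ(I = i, U_i ≤ r) = ∫_0^r t ^ ((1 - p_i) / p_i) dt = p_i r ^ (1 / p_i)`.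
For `j ≠ i` the constraint `x_j ≤ r` replaces the factor `t ^ (p_j / p_i)` by
`min (t ^ (p_j / p_i)) r`, and the integral splits at `t = r ^ (p_i / p_j)`.
-/

open MeasureTheory Filter Set ENNReal

local notation "𝕌" => volume.restrict (Ioo (0:ℝ) 1)

lemma uniform01_Iio {a : ℝ} (h1 : a ≤ 1) : 𝕌 (Iio a) = ENNReal.ofReal a := by
  rw [Measure.restrict_apply measurableSet_Iio, Iio_inter_Ioo, min_eq_left h1, Real.volume_Ioo,
    sub_zero]

lemma uniform01_Iic {a : ℝ} (h1 : a ≤ 1) : 𝕌 (Iic a) = ENNReal.ofReal a := by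
  rw [← measure_congr (Iio_ae_eq_Iic (μ := 𝕌)), uniform01_Iio h1]

lemma uniform01_Iio_inter_Iic {a b : ℝ} (ha1 : a ≤ 1) :
    𝕌 (Iio a ∩ Iic b) = ENNReal.ofReal (min a b) := by
  rw [measure_congr ((Iio_ae_eq_Iic (μ := 𝕌)).inter (ae_eq_refl (Iic b))), Iic_inter_Iic,
    uniform01_Iic (min_le_of_left_le ha1)]

lemma prod_uniform01_Iio_rpow {ι : Type*} (s : Finset ι) (e : ι → ℝ) (he : ∀ k, 0 ≤ e k)
    {t : ℝ} (ht0 : 0 < t) (ht1 : t ≤ 1) :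
    ∏ k ∈ s, 𝕌 (Iio (t ^ e k)) = ENNReal.ofReal (t ^ ∑ k ∈ s, e k) := by
  rw [Real.rpow_sum_of_pos ht0, ENNReal.ofReal_prod_of_nonneg fun k _ => by positivity]
  exact Finset.prod_congr rfl fun k _ =>
    uniform01_Iio (Real.rpow_le_one ht0.le ht1 (he k))

lemma prod_uniform01_Iio_rpow_inter_ite {ι : Type*} [DecidableEq ι] {s : Finset ι}
    {j : ι} (hj : j ∈ s) (e : ι → ℝ) (he : ∀ k, 0 ≤ e k) {r t : ℝ} (hr0 : 0 ≤ r)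
    (ht0 : 0 < t) (ht1 : t ≤ 1) :
    ∏ k ∈ s, 𝕌 (Iio (t ^ e k) ∩ if k = j then Iic r else univ) =
      ENNReal.ofReal (min (t ^ e j) r * t ^ ∑ k ∈ s.erase j, e k) := by
  have hrest : ∀ k ∈ s.erase j, 𝕌 (Iio (t ^ e k) ∩ if k = j then Iic r else univ) =
      𝕌 (Iio (t ^ e k)) := fun k hk => by simp [Finset.ne_of_mem_erase hk]
  rw [← Finset.mul_prod_erase _ _ hj, Finset.prod_congr rfl hrest,
    prod_uniform01_Iio_rpow _ _ he ht0 ht1, if_pos rfl,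
    uniform01_Iio_inter_Iic (Real.rpow_le_one ht0.le ht1 (he j)),
    ENNReal.ofReal_mul (le_min (Real.rpow_nonneg ht0.le _) hr0)]

lemma lintegral_Ioc_ofReal_rpow {c : ℝ} (hc : -1 < c) {a b : ℝ} (ha : 0 ≤ a) (hab : a ≤ b) :
    ∫⁻ t in Ioc a b, ENNReal.ofReal (t ^ c) =
      ENNReal.ofReal ((b ^ (c + 1) - a ^ (c + 1)) / (c + 1)) := by
  rw [← ofReal_integral_eq_lintegral_ofReal, ← intervalIntegral.integral_of_le hab,
    integral_rpow (Or.inl hc)]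
  · exact (intervalIntegral.intervalIntegrable_rpow' hc).1
  · filter_upwards [ae_restrict_mem measurableSet_Ioc] with t ht
    exact Real.rpow_nonneg (ha.trans ht.1.le) c

lemma lintegral_Ioc_zero_one_min_rpow_mul_rpow {a b r : ℝ} (ha : 0 < a) (hb : -1 < b)
    (hr0 : 0 ≤ r) (hr1 : r ≤ 1) :
    ∫⁻ t in Ioc 0 1, ENNReal.ofReal (min (t ^ a) r * t ^ b) =
      ENNReal.ofReal (r ^ ((a + b + 1) / a) / (a + b + 1)
        + (r - r ^ ((a + b + 1) / a)) / (b + 1)) := by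
  set s := r ^ a⁻¹
  have hs0 : 0 ≤ s := Real.rpow_nonneg hr0 _
  have hs1 : s ≤ 1 := Real.rpow_le_one hr0 hr1 (inv_nonneg.2 ha.le)
  have hsa : s ^ a = r := by rw [← Real.rpow_mul hr0, inv_mul_cancel₀ ha.ne', Real.rpow_one]
  have hsabc : s ^ (a + b + 1) = r ^ ((a + b + 1) / a) := by
    rw [← Real.rpow_mul hr0, inv_mul_eq_div]
  have hsb : r * s ^ (b + 1) = r ^ ((a + b + 1) / a) := by
    rw [← Real.rpow_mul hr0, ← Real.rpow_one_add' hr0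
      (add_pos one_pos (mul_pos (inv_pos.2 ha) (by linarith))).ne']
    congr 1
    field_simp
    ring
  have below : EqOn (fun t => ENNReal.ofReal (min (t ^ a) r * t ^ b))
      (fun t => ENNReal.ofReal (t ^ (a + b))) (Ioc 0 s) := fun t ht => by
    dsimp only
    rw [min_eq_left (hsa ▸ Real.rpow_le_rpow ht.1.le ht.2 ha.le), Real.rpow_add ht.1]
  have above : EqOn (fun t => ENNReal.ofReal (min (t ^ a) r * t ^ b))
      (fun t => ENNReal.ofReal r * ENNReal.ofReal (t ^ b)) (Ioc s 1) := fun t ht => by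
    dsimp only
    rw [min_eq_right (hsa ▸ Real.rpow_le_rpow hs0 ht.1.le ha.le), ENNReal.ofReal_mul hr0]
  have hsb1 : s ^ (b + 1) ≤ 1 := Real.rpow_le_one hs0 hs1 (by linarith)
  rw [← Ioc_union_Ioc_eq_Ioc hs0 hs1,
    lintegral_union measurableSet_Ioc (Ioc_disjoint_Ioc_of_le le_rfl),
    setLIntegral_congr_fun measurableSet_Ioc below, setLIntegral_congr_fun measurableSet_Ioc above,
    lintegral_const_mul' _ _ ofReal_ne_top, lintegral_Ioc_ofReal_rpow (by linarith) le_rfl hs0,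
    lintegral_Ioc_ofReal_rpow hb hs0 hs1, Real.zero_rpow (by linarith), Real.one_rpow, sub_zero,
    ← ENNReal.ofReal_mul hr0, ← ENNReal.ofReal_add (div_nonneg (Real.rpow_nonneg hs0 _)
      (by linarith)) (mul_nonneg hr0 (div_nonneg (by linarith) (by linarith))),
    mul_div_assoc', mul_one_sub, hsb, hsabc]

lemma Fin.prod_univ_erase_eq_prod_succAbove {M : Type*} [CommMonoid M] {n : ℕ}
    (f : Fin (n + 1) → M) (i : Fin (n + 1)) :
    ∏ k ∈ Finset.univ.erase i, f k = ∏ k, f (i.succAbove k) := by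
  rw [Fin.univ_succAbove n i, Finset.erase_cons, Finset.prod_map, Fin.coe_succAboveEmb]

theorem measure_pi_eq_setLIntegral_prod_erase {n : ℕ} {α : Type*} [MeasurableSpace α]
    (ν : Fin (n + 1) → Measure α) [∀ k, SigmaFinite (ν k)] (i : Fin (n + 1))
    {S : Set α} (hS : MeasurableSet S) {B : Fin (n + 1) → α → Set α}
    (hB : ∀ k, MeasurableSet {q : α × α | q.2 ∈ B k q.1}) :
    Measure.pi ν {x | x i ∈ S ∧ ∀ k ≠ i, x k ∈ B k (x i)} =
      ∫⁻ t in S, ∏ k ∈ Finset.univ.erase i, ν k (B k t) ∂ν i := by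
  set T : Set (α × (Fin n → α)) := {q | q.1 ∈ S ∧ ∀ k, q.2 k ∈ B (i.succAbove k) q.1}
  have hT : MeasurableSet T := by
    simp only [T, ofPred_and, ofPred_forall]
    refine (measurable_fst hS).inter <| .iInter fun k => ?_
    have hk : Measurable fun q : α × (Fin n → α) => (q.1, q.2 k) := by fun_prop
    exact hk (hB (i.succAbove k))
  have hpre : MeasurableEquiv.piFinSuccAbove (fun _ => α) i ⁻¹' T =
      {x | x i ∈ S ∧ ∀ k ≠ i, x k ∈ B k (x i)} := by
    ext x
    simp [T, Fin.forall_iff_succAbove i, Fin.removeNth]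
  rw [← hpre, (measurePreserving_piFinSuccAbove ν i).measure_preimage_equiv,
    Measure.prod_apply hT, ← lintegral_indicator hS]
  refine lintegral_congr fun t => ?_
  by_cases ht : t ∈ S
  · have hslice : Prod.mk t ⁻¹' T = Set.pi univ fun k => B (i.succAbove k) t := by
      ext y
      simp [T, ht]
    rw [indicator_of_mem ht, hslice, Measure.pi_pi, Fin.prod_univ_erase_eq_prod_succAbove]
  · have hslice : Prod.mk t ⁻¹' T = ∅ := by
      ext y
      simp [T, ht]
    rw [indicator_of_notMem ht, hslice, measure_empty]

lemma Real.log_div_lt_log_div_iff {x y a b : ℝ} (hx : 0 < x) (hy : 0 < y) (ha : 0 < a)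
    (hb : 0 < b) : Real.log x / a < Real.log y / b ↔ x < y ^ (a / b) := by
  rw [← Real.log_lt_log_iff hx (Real.rpow_pos_of_pos hy _), Real.log_rpow hy,
    div_lt_div_iff₀ ha hb, div_mul_eq_mul_div, lt_div_iff₀ hb, mul_comm a]

lemma eq_iff_forall_lt_of_forall_lt {ι α : Type*} [Preorder α] {s : ι → α} {a : ι}
    (ha : ∀ k, k ≠ a → s k < s a) (i : ι) : a = i ↔ ∀ k, k ≠ i → s k < s i := by
  refine ⟨fun h => h ▸ ha, fun hi => ?_⟩
  by_contra h
  exact lt_asymm (ha i (Ne.symm h)) (hi a h)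

/-- On `(0,1)^ι` this is the event that `i` maximises `log x_k / p_k`. -/
def gumbelMaxRegion {ι : Type*} (p : ι → ℝ) (i : ι) : Set (ι → ℝ) :=
  {x | ∀ k ≠ i, x k < x i ^ (p k / p i)}

lemma measurableSet_gumbelMaxRegion {ι : Type*} [Countable ι] (p : ι → ℝ) (i : ι) :
    MeasurableSet (gumbelMaxRegion p i) := by
  simp only [gumbelMaxRegion, ofPred_forall]
  exact .iInter fun k => .iInter fun _ =>
    measurableSet_lt (measurable_pi_apply k) ((measurable_pi_apply i).pow_const _)

lemma measure_gumbelMax_and_mem {ι Ω : Type*} [Fintype ι] [MeasurableSpace Ω]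
    {μ : Measure Ω} {p : ι → ℝ} (hp : ∀ k, 0 < p k) {U : ι → Ω → ℝ}
    (hUlaw : μ.map (fun ω k => U k ω) = Measure.pi fun _ => 𝕌) {I : Ω → ι}
    (hI : ∀ᵐ ω ∂μ, ∀ j, j ≠ I ω →
      Real.log (U j ω) / p j < Real.log (U (I ω) ω) / p (I ω))
    (i : ι) {S : Set (ι → ℝ)} (hS : MeasurableSet S) :
    μ {ω | I ω = i ∧ (fun k => U k ω) ∈ S} =
      Measure.pi (fun _ => 𝕌) (gumbelMaxRegion p i ∩ S) := by
  have : IsProbabilityMeasure 𝕌 := ⟨by simp⟩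
  -- A map whose image measure is nonzero is automatically a.e.-measurable.
  have hU : AEMeasurable (fun ω k => U k ω) μ :=
    .of_map_ne_zero (hUlaw ▸ IsProbabilityMeasure.ne_zero _)
  have hunit : ∀ᵐ ω ∂μ, ∀ k, U k ω ∈ Ioo 0 1 := by
    refine ae_of_ae_map hU (p := fun x => ∀ k, x k ∈ Ioo 0 1) ?_
    rw [hUlaw]
    exact ae_all_iff.2 fun k =>
      Measure.tendsto_eval_ae_ae.eventually (ae_restrict_mem measurableSet_Ioo)
  have hwin : ∀ᵐ ω ∂μ, I ω = i ↔ (fun k => U k ω) ∈ gumbelMaxRegion p i := by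
    filter_upwards [hI, hunit] with ω hIω hω
    rw [eq_iff_forall_lt_of_forall_lt hIω i]
    exact forall₂_congr fun k _ =>
      Real.log_div_lt_log_div_iff (hω k).1 (hω i).1 (hp k) (hp i)
  rw [← hUlaw, Measure.map_apply_of_aemeasurable hU
    ((measurableSet_gumbelMaxRegion p i).inter hS)]
  exact measure_congr (hwin.mono fun ω h => propext (and_congr_left' h))

section GumbelMax

variable {n : ℕ} {p : Fin (n + 1) → ℝ}

theorem uniform01_pi_gumbelMaxRegion_inter_le_self (hp : ∀ k, 0 < p k) (hpsum : ∑ k, p k = 1)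
    (i : Fin (n + 1)) {r : ℝ} (hr0 : 0 ≤ r) (hr1 : r ≤ 1) :
    Measure.pi (fun _ => 𝕌) (gumbelMaxRegion p i ∩ {x | x i ≤ r}) =
      ENNReal.ofReal (p i * r ^ (1 / p i)) := by
  have hregion : gumbelMaxRegion p i ∩ {x | x i ≤ r} =
      {x | x i ∈ Iic r ∧ ∀ k ≠ i, x k ∈ Iio (x i ^ (p k / p i))} := by
    ext x
    exact and_comm
  have hB : ∀ k, MeasurableSet {q : ℝ × ℝ | q.2 ∈ Iio (q.1 ^ (p k / p i))} := fun k =>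
    measurableSet_lt measurable_snd (measurable_fst.pow_const _)
  have hsum : ∑ k ∈ Finset.univ.erase i, p k / p i = (1 - p i) / p i := by
    rw [← Finset.sum_div, Finset.sum_erase_eq_sub (Finset.mem_univ i), hpsum]
  have hint : EqOn (fun t => ∏ k ∈ Finset.univ.erase i, 𝕌 (Iio (t ^ (p k / p i))))
      (fun t => ENNReal.ofReal (t ^ ((1 - p i) / p i))) (Ioc 0 r) := fun t ht => by
    dsimp only
    rw [prod_uniform01_Iio_rpow _ _ (fun k => (div_pos (hp k) (hp i)).le) ht.1 (ht.2.trans hr1),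
      hsum]
  have hc : (1 - p i) / p i + 1 = 1 / p i := by field_simp [(hp i).ne']; ring
  rw [hregion, measure_pi_eq_setLIntegral_prod_erase (fun _ => 𝕌) i measurableSet_Iic
      (B := fun k t => Iio (t ^ (p k / p i))) hB,
    setLIntegral_congr (Iio_ae_eq_Iic (μ := 𝕌)).symm,
    Measure.restrict_restrict measurableSet_Iio, Iio_inter_Ioo, min_eq_left hr1,
    setLIntegral_congr Ioo_ae_eq_Ioc,
    setLIntegral_congr_fun measurableSet_Ioc hint,
    lintegral_Ioc_ofReal_rpow (by rw [lt_div_iff₀ (hp i)]; linarith [hp i]) le_rfl hr0, hc,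
    Real.zero_rpow (one_div_pos.2 (hp i)).ne', sub_zero, div_div_eq_mul_div, div_one, mul_comm]

theorem uniform01_pi_gumbelMaxRegion_inter_le_of_ne (hp : ∀ k, 0 < p k) (hpsum : ∑ k, p k = 1)
    {i j : Fin (n + 1)} (hji : j ≠ i) {r : ℝ} (hr0 : 0 ≤ r) (hr1 : r ≤ 1) :
    Measure.pi (fun _ => 𝕌) (gumbelMaxRegion p i ∩ {x | x j ≤ r}) =
      ENNReal.ofReal (p i * (r - p j * r ^ (1 / p j)) / (1 - p j)) := by
  set B : Fin (n + 1) → ℝ → Set ℝ := fun k t =>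
    Iio (t ^ (p k / p i)) ∩ if k = j then Iic r else univ
  have hregion : gumbelMaxRegion p i ∩ {x | x j ≤ r} =
      {x | x i ∈ univ ∧ ∀ k ≠ i, x k ∈ B k (x i)} := by
    ext x
    simp only [gumbelMaxRegion, B, mem_inter_iff, mem_ofPred_eq, mem_Iio, mem_univ, true_and,
      mem_ite_univ_right, mem_Iic]
    exact ⟨fun ⟨h, hxj⟩ k hk => ⟨h k hk, fun hkj => hkj ▸ hxj⟩,
      fun h => ⟨fun k hk => (h k hk).1, (h j hji).2 rfl⟩⟩
  have hB : ∀ k, MeasurableSet {q : ℝ × ℝ | q.2 ∈ B k q.1} := fun k => by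
    refine (measurableSet_lt measurable_snd (measurable_fst.pow_const _)).inter ?_
    split_ifs
    · exact measurable_snd measurableSet_Iic
    · exact MeasurableSet.univ
  have hpij : p i + p j ≤ 1 := by
    rw [← hpsum, ← Finset.sum_pair hji.symm]
    exact Finset.sum_le_sum_of_subset_of_nonneg (Finset.subset_univ _) fun k _ _ => (hp k).le
  have hj : j ∈ Finset.univ.erase i := Finset.mem_erase.2 ⟨hji, Finset.mem_univ j⟩
  have hsum : ∑ k ∈ (Finset.univ.erase i).erase j, p k / p i = (1 - p i - p j) / p i := by
    rw [← Finset.sum_div, Finset.sum_erase_eq_sub hj, Finset.sum_erase_eq_sub (Finset.mem_univ i),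
      hpsum]
  have hint : EqOn (fun t => ∏ k ∈ Finset.univ.erase i, 𝕌 (B k t))
      (fun t => ENNReal.ofReal (min (t ^ (p j / p i)) r * t ^ ((1 - p i - p j) / p i)))
      (Ioc 0 1) := fun t ht =>
    (prod_uniform01_Iio_rpow_inter_ite hj _ (fun k => (div_pos (hp k) (hp i)).le) hr0 ht.1
      ht.2).trans (by rw [hsum])
  rw [hregion, measure_pi_eq_setLIntegral_prod_erase (fun _ => 𝕌) i MeasurableSet.univ hB,
    Measure.restrict_univ, setLIntegral_congr Ioo_ae_eq_Ioc,
    setLIntegral_congr_fun measurableSet_Ioc hint,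
    lintegral_Ioc_zero_one_min_rpow_mul_rpow (div_pos (hp j) (hp i))
      (by rw [lt_div_iff₀ (hp i)]; linarith [hp i]) hr0 hr1]
  have hpi := hp i
  have hpj1 : 1 - p j ≠ 0 := by linarith
  have habc : p j / p i + (1 - p i - p j) / p i + 1 = 1 / p i := by
    field_simp
    ring
  have hb1 : (1 - p i - p j) / p i + 1 = (1 - p j) / p i := by
    field_simp
    ring
  have hexp : 1 / p i / (p j / p i) = 1 / p j := by field_simp
  rw [habc, hb1, hexp]
  congr 1
  field_simp
  ring

end GumbelMax

theorem stmt_2_general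
    {Ω : Type*} [MeasurableSpace Ω] (μ : Measure Ω)
    (m : ℕ) (p : Fin m → ℝ)
    (hp : ∀ i, 0 < p i) (hpsum : ∑ i, p i = 1)
    (U : Fin m → Ω → ℝ)
    (hUlaw : Measure.map (fun ω i => U i ω) μ
      = Measure.pi fun _ : Fin m => volume.restrict (Set.Ioo (0:ℝ) 1))
    (I : Ω → Fin m)
    (hI : ∀ᵐ ω ∂μ, ∀ j, j ≠ I ω →
      Real.log (U j ω) / p j < Real.log (U (I ω) ω) / p (I ω)) :
    ∀ r ∈ Set.Icc (0:ℝ) 1, ∀ i : Fin m,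
      μ {ω | I ω = i ∧ U i ω ≤ r} = ENNReal.ofReal (p i * r ^ (1 / p i))
      ∧ ∀ j : Fin m, j ≠ i →
          μ {ω | I ω = i ∧ U j ω ≤ r}
            = ENNReal.ofReal (p i * (r - p j * r ^ (1 / p j)) / (1 - p j)) := by
  intro r ⟨hr0, hr1⟩ i
  cases m with
  | zero => exact i.elim0
  | succ n =>
    have hlaw (j : Fin (n + 1)) :
        μ {ω | I ω = i ∧ U j ω ≤ r} =
          Measure.pi (fun _ => 𝕌) (gumbelMaxRegion p i ∩ {x | x j ≤ r}) :=
      measure_gumbelMax_and_mem hp hUlaw hI i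
        (measurableSet_le (measurable_pi_apply j) measurable_const)
    exact ⟨(hlaw i).trans (uniform01_pi_gumbelMaxRegion_inter_le_self hp hpsum i hr0 hr1),
      fun j hji =>
        (hlaw j).trans (uniform01_pi_gumbelMaxRegion_inter_le_of_ne hp hpsum hji hr0 hr1)⟩

/-- For the Gumbel-max selection rule `I = argmax_i (log U_i)/p_i` with
i.i.d. `Uniform(0,1)` variables `U_1, …, U_m`: for every `r ∈ [0,1]` and `i`,
`ℙ(I = i ∧ U_i ≤ r) = p_i r^{1/p_i}`, and for every `j ≠ i`,
`ℙ(I = i ∧ U_j ≤ r) = p_i (r − p_j r^{1/p_j})/(1 − p_j)`. -/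
theorem stmt_2
    {Ω : Type*} [MeasurableSpace Ω] (μ : Measure Ω) [IsProbabilityMeasure μ]
    (m : ℕ) (hm : 2 ≤ m) (p : Fin m → ℝ)
    (hp : ∀ i, 0 < p i) (hpsum : ∑ i, p i = 1)
    (U : Fin m → Ω → ℝ) (hUmeas : ∀ i, Measurable (U i))
    (hUlaw : Measure.map (fun ω i => U i ω) μ
      = Measure.pi fun _ : Fin m => volume.restrict (Set.Ioo (0:ℝ) 1))
    (I : Ω → Fin m) (hImeas : Measurable I)
    (hI : ∀ᵐ ω ∂μ, ∀ j, j ≠ I ω →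
      Real.log (U j ω) / p j < Real.log (U (I ω) ω) / p (I ω)) :
    ∀ r ∈ Set.Icc (0:ℝ) 1, ∀ i : Fin m,
      μ {ω | I ω = i ∧ U i ω ≤ r} = ENNReal.ofReal (p i * r ^ (1 / p i))
      ∧ ∀ j : Fin m, j ≠ i →
          μ {ω | I ω = i ∧ U j ω ≤ r}
            = ENNReal.ofReal (p i * (r - p j * r ^ (1 / p j)) / (1 - p j)) :=
  stmt_2_general μ m p hp hpsum U hUlaw I hI
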